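/- arXiv:1911.01687 — 2 statements merged into one kernel-verified Lean document; each statement's English description precedes it below -/
import Mathlib

section
/- For every integer k ≥ 1 and every r ≥ 1, the number of words x_r x_{r-1} ⋯ x_1 of length r over the alphabet {0,1,...,k} with x_r ≠ 0 that end with an even number (possibly zero) of letters equal to k is exactly W_k(r+1) - W_k(r), where W_k(n) = ((k+1)^n - (-1)^n)/(k+2). -/
def W (k : ℤ) (n : ℕ) : ℤ := ((k + 1) ^ n - (-1) ^ n) / (k + 2)

/-! Let `E n` count the words of length `n + 1` with nonzero leading digit whose final run of
`k`s is even. Deleting the final letter `k` maps the odd-run words of length `n + 2` bijectively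
onto the even-run words of length `n + 1`, so `E (n + 1) + E n = k (k + 1) ^ (n + 1)`, the number of
all words of length `n + 2` with nonzero leading digit. Together with `E 0 = k - 1` this gives
`(k + 2) E n = k (k + 1) ^ (n + 1) + 2 (-1) ^ (n + 1) = (k + 2) (W (n + 2) - W (n + 1))`. -/

section LeadRun

variable {α : Type*} [DecidableEq α]

def leadRun (a : α) (l : List α) : ℕ := (l.takeWhile (· = a)).length

@[simp] lemma leadRun_nil (a : α) : leadRun a [] = 0 := rfl

lemma leadRun_cons (a b : α) (l : List α) :
    leadRun a (b :: l) = if b = a then leadRun a l + 1 else 0 := by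
  by_cases h : b = a <;> simp [leadRun, h]

lemma even_leadRun_cons_iff (a b : α) (l : List α) :
    Even (leadRun a (b :: l)) ↔ b ≠ a ∨ ¬ Even (leadRun a l) := by
  by_cases h : b = a <;> simp [leadRun_cons, h, Nat.even_add_one]

lemma leadRun_map {β : Type*} [DecidableEq β] {f : α → β} (hf : Function.Injective f)
    (a : α) (l : List α) : leadRun (f a) (l.map f) = leadRun a l := by
  simp [leadRun, List.takeWhile_map, Function.comp_def, hf.eq_iff]

end LeadRun

lemma card_fun_fin_succ_subtype_last {α : Type*} [Fintype α] (p : α → Prop) [DecidablePred p]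
    (n : ℕ) : Fintype.card {x : Fin (n + 1) → α // p (x (Fin.last n))} =
      Fintype.card {b // p b} * Fintype.card α ^ n := by
  let e : {z : α × (Fin n → α) // p z.1} ≃ {x : Fin (n + 1) → α // p (x (Fin.last n))} :=
    (Fin.snocEquiv fun _ => α).subtypeEquiv fun _ => by simp
  rw [← Fintype.card_congr e, Fintype.card_congr Equiv.prodSubtypeFstEquivSubtypeProd,
    Fintype.card_prod, Fintype.card_fun, Fintype.card_fin]

lemma mul_eq_of_add_succ_eq_mul_pow (f : ℕ → ℤ) (c q : ℤ)
    (h : ∀ n, f (n + 1) + f n = c * q ^ (n + 1)) (n : ℕ) :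
    (q + 1) * f n = c * q ^ (n + 1) + (-1) ^ n * ((q + 1) * f 0 - c * q) := by
  induction n with
  | zero => ring
  | succ n ih => linear_combination (q + 1) * h n - ih

section EvenRunCount

variable {α : Type*} [Fintype α] [DecidableEq α] (a : α) (p : α → Prop) [DecidablePred p]

/-- A word `x_{n+1} ⋯ x_1` is the tuple `x` with `x i = x_{i+1}`: the run is read from `x 0`, and
`x (Fin.last n)` is the leading letter. -/
def evenRunCount (n : ℕ) : ℕ :=
  Fintype.card {x : Fin (n + 1) → α // p (x (Fin.last n)) ∧ Even (leadRun a (List.ofFn x))}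

lemma evenRunCount_zero : evenRunCount a p 0 = Fintype.card {b // p b ∧ b ≠ a} :=
  Fintype.card_congr <| (Equiv.funUnique (Fin 1) α).subtypeEquiv fun x => by
    simp [List.ofFn_succ, even_leadRun_cons_iff]

lemma card_oddRun_succ (n : ℕ) :
    Fintype.card {x : Fin (n + 2) → α //
      p (x (Fin.last (n + 1))) ∧ ¬ Even (leadRun a (List.ofFn x))} = evenRunCount a p n := by
  have sum_cons (f : (Fin (n + 2) → α) → ℕ) : ∑ x, f x = ∑ b, ∑ y, f (Fin.cons b y) := by
    rw [← (Fin.consEquiv fun _ => α).sum_comp, Fintype.sum_prod_type]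
    rfl
  simp only [evenRunCount, Fintype.card_subtype, Finset.card_filter]
  rw [sum_cons, Finset.sum_comm]
  simp only [List.ofFn_cons, Fin.cons_last, even_leadRun_cons_iff, not_or, not_not, and_left_comm,
    ite_and, Finset.sum_ite_eq', Finset.mem_univ, if_true]

lemma evenRunCount_succ_add (n : ℕ) :
    evenRunCount a p (n + 1) + evenRunCount a p n =
      Fintype.card {b // p b} * Fintype.card α ^ (n + 1) := by
  rw [← card_oddRun_succ a p n, ← card_fun_fin_succ_subtype_last p, evenRunCount]
  simp only [Fintype.card_subtype, ← Finset.filter_filter]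
  exact Finset.card_filter_add_card_filter_not _

lemma evenRunCount_closed_form (n : ℕ) :
    ((Fintype.card α : ℤ) + 1) * evenRunCount a p n =
      Fintype.card {b // p b} * Fintype.card α ^ (n + 1) + (-1) ^ n *
        ((Fintype.card α + 1) * Fintype.card {b // p b ∧ b ≠ a} -
          Fintype.card {b // p b} * Fintype.card α) := by
  rw [← evenRunCount_zero]
  exact mul_eq_of_add_succ_eq_mul_pow (fun n => (evenRunCount a p n : ℤ)) _ _
    (fun n => by exact_mod_cast evenRunCount_succ_add a p n) n

end EvenRunCount

lemma mul_evenRunCount_digits (k : ℕ) (hk : 1 ≤ k) (n : ℕ) :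
    ((k : ℤ) + 2) * evenRunCount (Fin.last k) (fun b : Fin (k + 1) => (b : ℕ) ≠ 0) n =
      k * (k + 1) ^ (n + 1) + 2 * (-1) ^ (n + 1) := by
  have hcard : Fintype.card {b : Fin (k + 1) // (b : ℕ) ≠ 0} = k := by
    simp [Fintype.card_subtype, Finset.filter_ne']
  have hcard_ne_last : Fintype.card {b : Fin (k + 1) // (b : ℕ) ≠ 0 ∧ b ≠ Fin.last k} = k - 1 := by
    have : Fin.last k ≠ 0 := Fin.ext_iff.not.mpr (by simp; omega)
    simp [Fintype.card_subtype, ← Finset.filter_filter, Finset.filter_ne', Finset.card_erase_of_mem,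
      this]
  have h := evenRunCount_closed_form (Fin.last k) (fun b : Fin (k + 1) => (b : ℕ) ≠ 0) n
  rw [hcard, hcard_ne_last, Fintype.card_fin, Nat.cast_sub hk] at h
  push_cast at h
  linear_combination h

lemma mul_W (k : ℤ) (n : ℕ) : (k + 2) * W k n = (k + 1) ^ n - (-1) ^ n := by
  refine Int.mul_ediv_cancel' ?_
  simpa [sub_neg_eq_add, add_assoc, one_add_one_eq_two] using sub_dvd_pow_sub_pow (k + 1) (-1) n

lemma card_digitWords_eq_evenRunCount (k s : ℕ) :
    Fintype.card {x : Fin (s + 1) → Fin (k + 1) //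
      (x ⟨s + 1 - 1, by omega⟩ : ℕ) ≠ 0 ∧
        Even (((List.ofFn fun i => (x i : ℕ)).takeWhile fun d => d = k).length)} =
      evenRunCount (Fin.last k) (fun b => (b : ℕ) ≠ 0) s :=
  Fintype.card_congr <| Equiv.subtypeEquivRight fun x => by
    rw [← leadRun_map Fin.val_injective, Fin.val_last, List.map_ofFn]
    rfl

theorem stmt_13 (k r : ℕ) (hk : 1 ≤ k) (hr : 1 ≤ r) :
    (Fintype.card
      {x : Fin r → Fin (k + 1) //
        (x ⟨r - 1, by omega⟩ : ℕ) ≠ 0 ∧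
          Even (((List.ofFn fun i => (x i : ℕ)).takeWhile fun d => d = k).length)} : ℤ) =
      W k (r + 1) - W k r := by
  obtain ⟨s, rfl⟩ : ∃ s, r = s + 1 := ⟨r - 1, by omega⟩
  apply mul_left_cancel₀ (show (k : ℤ) + 2 ≠ 0 by positivity)
  rw [card_digitWords_eq_evenRunCount, mul_evenRunCount_digits k hk s, mul_sub, mul_W, mul_W]
  ring
end

section
/- Let t be a Sturmian sequence over {0,1} in which the factor '00' does not occur, and let u = (μ_n)_{n≥1} where μ_n is the number of 0's between the n-th and (n+1)-th occurrence of 1 in t. Then μ_n ∈ {0,1} for all n, t = φ(u) up to a possible initial 0 (where φ: 0 → 1, 1 → 10 applied after t's first 1), and u is again a Sturmian sequence. -/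
/-- The set of factors of length `n` of the infinite word `t`. -/
def factorSet {α : Type*} (t : ℕ → α) (n : ℕ) : Set (List α) :=
  {w | ∃ i, w = (List.range n).map fun j => t (i + j)}

/-- `t` is Sturmian: it has exactly `n + 1` factors of each length `n ≥ 1`. -/
def IsSturmian {α : Type*} (t : ℕ → α) : Prop :=
  ∀ n, 1 ≤ n → (factorSet t n).ncard = n + 1

/-!
Every 1 of `t` is followed by `μ n` zeros, so from its first 1 on, `t` is the concatenation of
the blocks `1 0^(μ n)`, and `μ n ≤ 1` because `00` is not a factor.

If `μ` were eventually periodic, so would be `t`, which a Sturmian word is not; hence the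
complexity of `μ` strictly increases with the length. Conversely, a right special factor `v` of
`μ` (both `v 0` and `v 1` are factors) lifts to the right special factor `φ(v) 1` of `t`. Right
special factors are closed under suffixes and `t` has only one of each length, so the lifts of
two right special factors of `μ` of the same length are suffixes of one another, and decoding
shows that the two factors coincide. Thus the complexity of `μ` grows by exactly one at each step.
-/

section Factors

variable {α : Type*} (x : ℕ → α)

def factorAt (i n : ℕ) : List α := (List.range n).map fun j => x (i + j)

variable {x}

@[simp] lemma length_factorAt (i n : ℕ) : (factorAt x i n).length = n := by
  simp [factorAt]

@[simp] lemma getElem_factorAt {i n k : ℕ} (hk : k < (factorAt x i n).length) :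
    (factorAt x i n)[k] = x (i + k) := by
  simp [factorAt]

@[simp] lemma factorAt_zero (i : ℕ) : factorAt x i 0 = [] := rfl

lemma factorAt_succ (i n : ℕ) : factorAt x i (n + 1) = x i :: factorAt x (i + 1) n := by
  simp [factorAt, List.range_succ_eq_map, Nat.add_assoc, Nat.add_comm 1]

lemma factorAt_succ' (i n : ℕ) : factorAt x i (n + 1) = factorAt x i n ++ [x (i + n)] := by
  simp [factorAt, List.range_succ]

lemma factorAt_add (i m n : ℕ) :
    factorAt x i (m + n) = factorAt x i m ++ factorAt x (i + m) n := by
  simp [factorAt, List.range_add, Nat.add_assoc]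

lemma take_factorAt (i k n : ℕ) : (factorAt x i n).take k = factorAt x i (min k n) := by
  simp [factorAt, ← List.map_take, List.take_range]

lemma drop_factorAt (i k n : ℕ) : (factorAt x i n).drop k = factorAt x (i + k) (n - k) := by
  rcases le_total k n with h | h
  · obtain ⟨d, rfl⟩ := Nat.exists_eq_add_of_le h
    rw [factorAt_add, List.drop_left' (length_factorAt i k), Nat.add_sub_cancel_left]
  · simp [h]

lemma factorAt_eq_replicate {i n : ℕ} {a : α} (h : ∀ k < n, x (i + k) = a) :
    factorAt x i n = List.replicate n a := by
  simp only [List.eq_replicate_iff, length_factorAt, true_and]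
  simp only [factorAt, List.mem_map, List.mem_range]
  rintro _ ⟨k, hk, rfl⟩
  exact h k hk

lemma mem_factorSet {w : List α} {n : ℕ} : w ∈ factorSet x n ↔ ∃ i, w = factorAt x i n :=
  Iff.rfl

lemma factorAt_mem_factorSet (i n : ℕ) : factorAt x i n ∈ factorSet x n := ⟨i, rfl⟩

lemma mem_factorSet_of_factorAt_eq {w : List α} {i n : ℕ} (h : factorAt x i n = w) :
    w ∈ factorSet x w.length := by
  subst h; rw [length_factorAt]; exact factorAt_mem_factorSet i n

lemma length_of_mem_factorSet {w : List α} {n : ℕ} (h : w ∈ factorSet x n) : w.length = n := by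
  obtain ⟨i, rfl⟩ := h; exact length_factorAt i n

lemma factorSet_zero : factorSet x 0 = {[]} := by
  ext w; simp [mem_factorSet]

lemma factorSet_finite (hx : (Set.range x).Finite) (n : ℕ) : (factorSet x n).Finite := by
  have := hx.to_subtype
  refine ((List.finite_length_eq (Set.range x) n).image (List.map Subtype.val)).subset ?_
  rintro _ ⟨i, rfl⟩
  refine ⟨factorAt (Set.rangeFactorization x) i n, length_factorAt i n, ?_⟩
  simp [factorAt, Set.rangeFactorization]

lemma take_mem_factorSet {w : List α} {n : ℕ} (h : w ∈ factorSet x n) (k : ℕ) :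
    w.take k ∈ factorSet x (min k n) := by
  obtain ⟨i, rfl⟩ := h; exact ⟨i, take_factorAt i k n⟩

lemma drop_mem_factorSet {w : List α} {n : ℕ} (h : w ∈ factorSet x n) (k : ℕ) :
    w.drop k ∈ factorSet x (n - k) := by
  obtain ⟨i, rfl⟩ := h; exact ⟨i + k, drop_factorAt i k n⟩

lemma factorSet_eq_image_take (n : ℕ) : factorSet x n = List.take n '' factorSet x (n + 1) := by
  ext w
  constructor
  · rintro ⟨i, rfl⟩
    refine ⟨_, factorAt_mem_factorSet i (n + 1), ?_⟩
    rw [take_factorAt, min_eq_left n.le_succ]; rfl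
  · rintro ⟨w, hw, rfl⟩
    simpa using take_mem_factorSet hw n

end Factors

section Periodicity

variable {α : Type*} {x : ℕ → α}

def EventuallyPeriodic (x : ℕ → α) : Prop :=
  ∃ N P, 0 < P ∧ ∀ m, N ≤ m → x (m + P) = x m

lemma EventuallyPeriodic.ncard_factorSet_le (hx : EventuallyPeriodic x) :
    ∃ C, ∀ n, (factorSet x n).ncard ≤ C := by
  obtain ⟨N, P, hP, hper⟩ := hx
  refine ⟨N + P, fun n => ?_⟩
  have hshift : ∀ i, N ≤ i → factorAt x (i + P) n = factorAt x i n := fun i hi => by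
    simp only [factorAt, Nat.add_right_comm i P]
    exact List.map_congr_left fun j _ => hper (i + j) (by omega)
  have hsmall : ∀ i, ∃ p < N + P, factorAt x p n = factorAt x i n := by
    intro i
    induction i using Nat.strong_induction_on with
    | _ i ih =>
      by_cases hi : i < N + P
      · exact ⟨i, hi, rfl⟩
      · obtain ⟨p, hp, hpi⟩ := ih (i - P) (by omega)
        refine ⟨p, hp, hpi.trans ?_⟩
        rw [← hshift (i - P) (by omega), Nat.sub_add_cancel (by omega)]
  calc (factorSet x n).ncard
      ≤ ((fun p => factorAt x p n) '' (Finset.range (N + P) : Set ℕ)).ncard := by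
        refine Set.ncard_le_ncard ?_ ((Finset.range (N + P)).finite_toSet.image _)
        rintro _ ⟨i, rfl⟩
        obtain ⟨p, hp, hpi⟩ := hsmall i
        exact ⟨p, by simpa using hp, hpi⟩
    _ ≤ N + P := by
        simpa using Set.ncard_image_le (f := fun p => factorAt x p n)
          (Finset.range (N + P)).finite_toSet

lemma IsSturmian.not_eventuallyPeriodic (hx : IsSturmian x) : ¬ EventuallyPeriodic x := by
  intro hper
  obtain ⟨C, hC⟩ := hper.ncard_factorSet_le
  have := hx (C + 1) (by omega)
  have := hC (C + 1)
  omega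

lemma eventuallyPeriodic_of_ncard_factorSet_succ_le {n : ℕ} (hfin : (factorSet x (n + 1)).Finite)
    (hle : (factorSet x (n + 1)).ncard ≤ (factorSet x n).ncard) : EventuallyPeriodic x := by
  have himage := factorSet_eq_image_take (x := x) n
  have hinj : Set.InjOn (List.take n) (factorSet x (n + 1)) :=
    Set.injOn_of_ncard_image_eq (le_antisymm (Set.ncard_image_le hfin) (himage ▸ hle)) hfin
  have hext : ∀ i j, factorAt x i n = factorAt x j n →
      factorAt x i (n + 1) = factorAt x j (n + 1) := fun i j h =>
    hinj (factorAt_mem_factorSet i _) (factorAt_mem_factorSet j _) <| by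
      simpa only [take_factorAt, min_eq_left n.le_succ] using h
  obtain ⟨i, j, hij, hrep⟩ := (himage ▸ hfin.image _ : (factorSet x n).Finite)
    |>.exists_lt_map_eq_of_forall_mem (f := fun i => factorAt x i n) (factorAt_mem_factorSet · n)
  have hprop : ∀ d, factorAt x (i + d) (n + 1) = factorAt x (j + d) (n + 1) := by
    intro d
    induction d with
    | zero => exact hext i j hrep
    | succ d ih =>
      rw [factorAt_succ, factorAt_succ] at ih
      simpa only [Nat.add_assoc] using hext _ _ (List.cons.inj ih).2
  refine ⟨i + n, j - i, by omega, fun m hm => ?_⟩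
  have h := hprop (m - n - i)
  rw [factorAt_succ', factorAt_succ'] at h
  have := List.singleton_inj.mp (List.append_inj_right' h rfl)
  rwa [show i + (m - n - i) + n = m by omega, show j + (m - n - i) + n = m + (j - i) by omega,
    eq_comm] at this

end Periodicity

section RightSpecial

variable {α : Type*} {x : ℕ → α} {a b : α}

def IsRightSpecial (x : ℕ → α) (a b : α) (u : List α) : Prop :=
  u ++ [a] ∈ factorSet x (u.length + 1) ∧ u ++ [b] ∈ factorSet x (u.length + 1)

lemma IsRightSpecial.drop {u : List α} (hu : IsRightSpecial x a b u) {k : ℕ}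
    (hk : k ≤ u.length) : IsRightSpecial x a b (u.drop k) := by
  have hlen : u.length + 1 - k = (u.drop k).length + 1 := by
    rw [List.length_drop]; omega
  constructor
  · simpa [List.drop_append_of_le_length hk, hlen] using drop_mem_factorSet hu.1 k
  · simpa [List.drop_append_of_le_length hk, hlen] using drop_mem_factorSet hu.2 k

lemma mem_factorSet_succ_iff {w : List α} {n : ℕ} :
    w ∈ factorSet x (n + 1) ↔ ∃ i, w = factorAt x i n ++ [x (i + n)] := by
  simp only [mem_factorSet, factorAt_succ']

lemma ncard_factorSet_succ_le_add_one (hx : ∀ i, x i = a ∨ x i = b) {n : ℕ}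
    (hfin : (factorSet x n).Finite)
    (hS : {u | IsRightSpecial x a b u ∧ u.length = n}.Subsingleton) :
    (factorSet x (n + 1)).ncard ≤ (factorSet x n).ncard + 1 := by
  obtain ⟨v, huniq⟩ : ∃ v, ∀ u, IsRightSpecial x a b u → u.length = n → u = v := by
    by_cases hex : ∃ v, IsRightSpecial x a b v ∧ v.length = n
    · obtain ⟨v, hv⟩ := hex
      exact ⟨v, fun u hu hun => hS ⟨hu, hun⟩ hv⟩
    · exact ⟨[], fun u hu hun => (hex ⟨u, hu, hun⟩).elim⟩
  -- Two factors `u c`, `u d` with `c ≠ d` make `u` right special, so one of them is `v a`.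
  have hinj : Set.InjOn (List.take n) (factorSet x (n + 1) \ {v ++ [a]}) := by
    rintro _ ⟨hw, hwv⟩ _ ⟨hw', hwv'⟩ htake
    obtain ⟨i, rfl⟩ := mem_factorSet_succ_iff.mp hw
    obtain ⟨j, rfl⟩ := mem_factorSet_succ_iff.mp hw'
    simp only [List.take_left' (length_factorAt _ n)] at htake
    set u := factorAt x i n with hu
    rw [← htake] at hw' hwv' ⊢
    have hspecial :
        u ++ [a] ∈ factorSet x (n + 1) → u ++ [b] ∈ factorSet x (n + 1) → u = v :=
      fun ha hb => huniq u (by rw [IsRightSpecial, length_factorAt]; exact ⟨ha, hb⟩)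
        (length_factorAt i n)
    rcases hx (i + n) with hi | hi <;> rcases hx (j + n) with hj | hj <;>
      simp only [hi, hj] at hw hw' hwv hwv' ⊢
    · exact absurd (by rw [hspecial hw hw']; rfl) hwv
    · exact absurd (by rw [hspecial hw' hw]; rfl) hwv'
  calc (factorSet x (n + 1)).ncard
      ≤ (factorSet x (n + 1) \ {v ++ [a]}).ncard + ({v ++ [a]} : Set (List α)).ncard :=
        Set.ncard_le_ncard_sdiff_add_ncard _ _
    _ ≤ (factorSet x n).ncard + 1 := by
        rw [Set.ncard_singleton]
        have := Set.ncard_le_ncard_of_injOn _ (fun w hw => by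
          simpa using take_mem_factorSet hw.1 n) hinj hfin
        omega

lemma ncard_factorSet_add_two_le (hab : a ≠ b) {u u' : List α} (hu : IsRightSpecial x a b u)
    (hu' : IsRightSpecial x a b u') (hne : u ≠ u') (hlen : u'.length = u.length)
    (hfin : (factorSet x (u.length + 1)).Finite) :
    (factorSet x u.length).ncard + 2 ≤ (factorSet x (u.length + 1)).ncard := by
  set n := u.length
  set E : Set (List α) := {u ++ [a], u' ++ [a]}
  have hE : E ⊆ factorSet x (n + 1) := by
    rintro _ (rfl | rfl)
    exacts [hu.1, hlen ▸ hu'.1]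
  have hEcard : E.ncard = 2 := Set.ncard_pair (mt List.append_cancel_right hne)
  have hnotE : ∀ w, w ++ [b] ∉ E := by
    rintro w (h | h) <;> exact hab (List.singleton_inj.mp (List.append_inj_right' h rfl)).symm
  have hcover : factorSet x n ⊆ List.take n '' (factorSet x (n + 1) \ E) := by
    intro w hw
    obtain ⟨w', hw', rfl⟩ := (factorSet_eq_image_take n).subset hw
    by_cases hw'E : w' ∈ E
    · obtain ⟨c, hc⟩ : ∃ c, c ++ [a] = w' ∧ c ++ [b] ∈ factorSet x (n + 1) := by
        rcases hw'E with rfl | rfl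
        exacts [⟨u, rfl, hu.2⟩, ⟨u', rfl, hlen ▸ hu'.2⟩]
      refine ⟨c ++ [b], ⟨hc.2, hnotE c⟩, ?_⟩
      have hc_len : c.length = n := by simpa using length_of_mem_factorSet hc.2
      rw [← hc.1, List.take_left' hc_len, List.take_left' hc_len]
    · exact ⟨w', ⟨hw', hw'E⟩, rfl⟩
  have hsdiff := Set.ncard_sdiff hE (hfin.subset hE)
  have hle := Set.ncard_le_ncard hE hfin
  have := (Set.ncard_le_ncard hcover (hfin.sdiff.image _)).trans
    (Set.ncard_image_le hfin.sdiff)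
  omega

lemma IsSturmian.eq_of_isRightSpecial (hx : IsSturmian x) (hab : a ≠ b) {u u' : List α}
    (hu : IsRightSpecial x a b u) (hu' : IsRightSpecial x a b u') (hlen : u'.length = u.length)
    (hpos : 0 < u.length) : u = u' := by
  by_contra hne
  have hcard := hx (u.length + 1) (by omega)
  have := ncard_factorSet_add_two_le hab hu hu' hne hlen
    (Set.finite_of_ncard_ne_zero (by omega))
  rw [hcard, hx u.length hpos] at this
  omega

end RightSpecial

section Coding

-- The paper's `φ : 0 ↦ 1, 1 ↦ 10`, extended to all gap lengths by `a ↦ 1 0^a`.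
def phi (v : List ℕ) : List Bool := v.flatMap fun a => true :: List.replicate a false

def phiRev (v : List ℕ) : List Bool := v.flatMap fun a => List.replicate a false ++ [true]

lemma phi_append (v w : List ℕ) : phi (v ++ w) = phi v ++ phi w := List.flatMap_append

lemma phi_singleton (a : ℕ) : phi [a] = true :: List.replicate a false := by simp [phi]

lemma reverse_phi_append_true (v : List ℕ) :
    (phi v ++ [true]).reverse = true :: phiRev v.reverse := by
  simp [phi, phiRev, List.reverse_flatMap, Function.comp_def]

lemma replicate_false_append_prefix {m n : ℕ} {X Y : List Bool}
    (h : List.replicate m false ++ true :: X <+: List.replicate n false ++ true :: Y) :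
    m = n ∧ X <+: Y := by
  induction m generalizing n with
  | zero => cases n <;> simp_all [List.replicate_succ]
  | succ m ih =>
    cases n with
    | zero => simp_all [List.replicate_succ]
    | succ n =>
      obtain ⟨rfl, hXY⟩ := ih (by simpa [List.replicate_succ] using h)
      exact ⟨rfl, hXY⟩

lemma phiRev_cons (a : ℕ) (v : List ℕ) :
    phiRev (a :: v) = List.replicate a false ++ true :: phiRev v := by
  simp [phiRev]

lemma prefix_of_phiRev_prefix : ∀ {v' v : List ℕ}, phiRev v' <+: phiRev v → v' <+: v
  | [], _, _ => List.nil_prefix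
  | _ :: _, [], h => by simp [phiRev] at h
  | _ :: _, _ :: _, h => by
    rw [phiRev_cons, phiRev_cons] at h
    obtain ⟨rfl, htail⟩ := replicate_false_append_prefix h
    exact List.cons_prefix_cons.mpr ⟨rfl, prefix_of_phiRev_prefix htail⟩

lemma suffix_of_phi_append_true_suffix {v' v : List ℕ}
    (h : phi v' ++ [true] <:+ phi v ++ [true]) : v' <:+ v := by
  rw [← List.reverse_prefix, reverse_phi_append_true, reverse_phi_append_true,
    List.cons_prefix_cons] at h
  simpa using prefix_of_phiRev_prefix h.2

lemma flatMap_range_eq_map_phi {μ : ℕ → ℕ} (hμ : ∀ n, μ n ≤ 1) (m : ℕ) :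
    ((List.range m).flatMap fun j => if μ j = 0 then [1] else [1, 0] : List ℕ) =
      (phi (factorAt μ 0 m)).map fun b => if b then 1 else 0 := by
  simp only [phi, factorAt, List.flatMap_map, List.map_flatMap, Nat.zero_add]
  refine List.flatMap_congr fun j _ => ?_
  rcases Nat.le_one_iff_eq_zero_or_eq_one.mp (hμ j) with h | h <;> simp [h]

end Coding

structure EnumeratesOnes (t : ℕ → Bool) (q : ℕ → ℕ) : Prop where
  strictMono : StrictMono q
  apply_eq_true : ∀ n, t (q n) = true
  exists_eq_of_eq_true : ∀ i, t i = true → ∃ n, q n = i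

def gaps (q : ℕ → ℕ) (n : ℕ) : ℕ := q (n + 1) - q n - 1

namespace EnumeratesOnes

variable {t : ℕ → Bool} {q : ℕ → ℕ}

lemma succ_eq (h : EnumeratesOnes t q) (n : ℕ) : q (n + 1) = q n + gaps q n + 1 := by
  have := h.strictMono (Nat.lt_add_one n)
  unfold gaps; omega

lemma eq_false_of_lt_of_lt (h : EnumeratesOnes t q) {n p : ℕ} (h₁ : q n < p)
    (h₂ : p < q (n + 1)) : t p = false := by
  by_contra hp
  obtain ⟨m, rfl⟩ := h.exists_eq_of_eq_true p (by simpa using hp)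
  have := h.strictMono.lt_iff_lt.mp h₁
  have := h.strictMono.lt_iff_lt.mp h₂
  omega

lemma gaps_le_one (h : EnumeratesOnes t q) (h00 : ∀ n, t n = true ∨ t (n + 1) = true)
    (n : ℕ) : gaps q n ≤ 1 := by
  by_contra hn
  have hsucc := h.succ_eq n
  have h1 : t (q n + 1) = false := h.eq_false_of_lt_of_lt (n := n) (by omega) (by omega)
  have h2 : t (q n + 2) = false := h.eq_false_of_lt_of_lt (n := n) (by omega) (by omega)
  simpa [h1, h2] using h00 (q n + 1)

lemma factorAt_succ_gaps (h : EnumeratesOnes t q) (n : ℕ) :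
    factorAt t (q n) (gaps q n + 1) = true :: List.replicate (gaps q n) false := by
  rw [factorAt_succ, h.apply_eq_true, factorAt_eq_replicate]
  intro k hk
  exact h.eq_false_of_lt_of_lt (n := n) (by omega) (by have := h.succ_eq n; omega)

lemma factorAt_eq_phi (h : EnumeratesOnes t q) (i m : ℕ) :
    factorAt t (q i) (q (i + m) - q i) = phi (factorAt (gaps q) i m) := by
  induction m with
  | zero => simp [phi]
  | succ m ih =>
    have hmono := h.strictMono.monotone (Nat.le_add_right i m)
    have hsucc := h.succ_eq (i + m)
    rw [show q (i + (m + 1)) - q i = (q (i + m) - q i) + (gaps q (i + m) + 1) by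
      rw [← Nat.add_assoc, hsucc]; omega, factorAt_add, ih, Nat.add_sub_cancel' hmono,
      h.factorAt_succ_gaps, factorAt_succ', phi_append, phi_singleton]

lemma factorAt_eq_phi_append_true (h : EnumeratesOnes t q) (i m : ℕ) :
    factorAt t (q i) (q (i + m) - q i + 1) = phi (factorAt (gaps q) i m) ++ [true] := by
  have hmono := h.strictMono.monotone (Nat.le_add_right i m)
  rw [factorAt_succ', h.factorAt_eq_phi, Nat.add_sub_cancel' hmono, h.apply_eq_true]

lemma isRightSpecial_phi (h : EnumeratesOnes t q) {v : List ℕ}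
    (hv : IsRightSpecial (gaps q) 0 1 v) : IsRightSpecial t true false (phi v ++ [true]) := by
  obtain ⟨i, hi⟩ := mem_factorSet.mp hv.1
  obtain ⟨j, hj⟩ := mem_factorSet.mp hv.2
  constructor
  · have := mem_factorSet_of_factorAt_eq (h.factorAt_eq_phi_append_true i (v.length + 1))
    rw [← hi] at this
    simpa [phi_append, phi_singleton] using this
  · have := mem_factorSet_of_factorAt_eq (h.factorAt_eq_phi j (v.length + 1))
    rw [← hj] at this
    simpa [phi_append, phi_singleton] using this

lemma apply_eq_true_iff (h : EnumeratesOnes t q) {i : ℕ} : t i = true ↔ ∃ n, q n = i :=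
  ⟨h.exists_eq_of_eq_true i, fun ⟨n, hn⟩ => hn ▸ h.apply_eq_true n⟩

lemma eq_of_isRightSpecial_gaps (h : EnumeratesOnes t q) (ht : IsSturmian t) {v v' : List ℕ}
    (hv : IsRightSpecial (gaps q) 0 1 v) (hv' : IsRightSpecial (gaps q) 0 1 v')
    (hlen : v'.length = v.length) : v = v' := by
  wlog hle : (phi v').length ≤ (phi v).length generalizing v v'
  · exact (this hv' hv hlen.symm (by omega)).symm
  have hW := h.isRightSpecial_phi hv
  have hW' := h.isRightSpecial_phi hv'
  -- the suffix of `φ(v) 1` of the length of `φ(v') 1` is right special, so it is `φ(v') 1`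
  have hdrop := ht.eq_of_isRightSpecial (by decide)
    (hW.drop (k := (phi v ++ [true]).length - (phi v' ++ [true]).length) (Nat.sub_le _ _)) hW'
    (by simp only [List.length_drop, List.length_append, List.length_singleton]; omega) (by simp)
  have hsuf := suffix_of_phi_append_true_suffix (hdrop ▸ List.drop_suffix _ _)
  exact (hsuf.eq_of_length hlen).symm

lemma eventuallyPeriodic_of_gaps (h : EnumeratesOnes t q) (hper : EventuallyPeriodic (gaps q)) :
    EventuallyPeriodic t := by
  obtain ⟨N, P, hP, hper⟩ := hper
  have hlt : q N < q (N + P) := h.strictMono (by omega)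
  set Q := q (N + P) - q N
  have hshift : ∀ m, N ≤ m → q (m + P) = q m + Q := by
    intro m hm
    induction m, hm using Nat.le_induction with
    | base => omega
    | succ m hm ih =>
      rw [Nat.add_right_comm, h.succ_eq, h.succ_eq, ih, hper m hm]
      omega
  refine ⟨q N, Q, by omega, fun p hp => Bool.eq_iff_iff.mpr ?_⟩
  rw [h.apply_eq_true_iff, h.apply_eq_true_iff]
  constructor
  · rintro ⟨m', hm'⟩
    have hm'P : N + P ≤ m' := h.strictMono.le_iff_le.mp (by omega)
    refine ⟨m' - P, ?_⟩
    have := hshift (m' - P) (by omega)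
    rw [Nat.sub_add_cancel (by omega)] at this
    omega
  · rintro ⟨m, rfl⟩
    exact ⟨m + P, hshift m (h.strictMono.le_iff_le.mp hp)⟩

lemma isSturmian_gaps (h : EnumeratesOnes t q) (ht : IsSturmian t)
    (h00 : ∀ n, t n = true ∨ t (n + 1) = true) : IsSturmian (gaps q) := by
  have h01 : ∀ n, gaps q n = 0 ∨ gaps q n = 1 := fun n => by
    have := h.gaps_le_one h00 n; omega
  have hfin : ∀ n, (factorSet (gaps q) n).Finite := factorSet_finite <|
    (Set.toFinite {0, 1}).subset <| by rintro _ ⟨n, rfl⟩; rcases h01 n with hn | hn <;> simp [hn]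
  have hstep : ∀ n, (factorSet (gaps q) (n + 1)).ncard = (factorSet (gaps q) n).ncard + 1 := by
    intro n
    have hlower : (factorSet (gaps q) n).ncard < (factorSet (gaps q) (n + 1)).ncard :=
      lt_of_not_ge fun hle => ht.not_eventuallyPeriodic <|
        h.eventuallyPeriodic_of_gaps (eventuallyPeriodic_of_ncard_factorSet_succ_le (hfin _) hle)
    have hupper := ncard_factorSet_succ_le_add_one h01 (hfin n) fun u hu u' hu' =>
      h.eq_of_isRightSpecial_gaps ht hu.1 hu'.1 (hu'.2.trans hu.2.symm)
    omega
  suffices ∀ n, (factorSet (gaps q) n).ncard = n + 1 from fun n _ => this n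
  intro n
  induction n with
  | zero => simp [factorSet_zero]
  | succ n ih => rw [hstep, ih]

lemma toNat_apply_eq_getD (h : EnumeratesOnes t q) (h01 : ∀ n, gaps q n ≤ 1) (m i : ℕ)
    (hi : i < ((List.range m).flatMap fun j =>
      if gaps q j = 0 then [1] else [1, 0] : List ℕ).length) :
    (if t (q 0 + i) then 1 else 0) = ((List.range m).flatMap fun j =>
      if gaps q j = 0 then ([1] : List ℕ) else [1, 0]).getD i 0 := by
  rw [flatMap_range_eq_map_phi h01, ← h.factorAt_eq_phi 0 m] at hi ⊢
  rw [List.getD_eq_getElem _ _ hi, List.getElem_map, getElem_factorAt]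

end EnumeratesOnes

theorem stmt_19 (t : ℕ → Bool) (hstur : IsSturmian t)
    (h00 : ∀ n, t n = true ∨ t (n + 1) = true)
    -- `q` enumerates the positions of the 1's of `t` in increasing order
    (q : ℕ → ℕ) (hq : StrictMono q) (hq1 : ∀ n, t (q n) = true)
    (hqall : ∀ i, t i = true → ∃ n, q n = i)
    -- `μ n` is the number of 0's between the `n`-th and `(n+1)`-th occurrence of 1 in `t`
    (μ : ℕ → ℕ) (hμ : ∀ n, μ n = q (n + 1) - q n - 1) :
    (∀ n, μ n = 0 ∨ μ n = 1) ∧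
      -- `t`, after its first 1, coincides with `φ(μ)` where `φ : 0 ↦ 1, 1 ↦ 10`:
      (∀ m, ∀ i < ((List.range m).flatMap fun j =>
            if μ j = 0 then [1] else [1, 0] : List ℕ).length,
          (if t (q 0 + i) then 1 else 0) =
            ((List.range m).flatMap fun j =>
              if μ j = 0 then ([1] : List ℕ) else [1, 0]).getD i 0) ∧
      IsSturmian μ := by
  obtain rfl : μ = gaps q := funext hμ
  have h : EnumeratesOnes t q := ⟨hq, hq1, hqall⟩
  have h01 := h.gaps_le_one h00
  exact ⟨fun n => Nat.le_one_iff_eq_zero_or_eq_one.mp (h01 n), h.toNat_apply_eq_getD h01,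
    h.isSturmian_gaps hstur h00⟩
end
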